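/- Define g_λ(t,x) := t^{-2d}·exp( −|𝕋_t^{-1}x|²/(2λ) ) for λ, t > 0 and x ∈ ℝ^{2d}. Then for all λ₁, λ₂ > 0 there exist constants c, C > 0, depending only on d, λ₁, λ₂, such that for all ε₁, ε₂ > 0 and x′, x″ ∈ ℝ^{2d}: c·g_{(λ₁∧λ₂)/8}(ε₁+ε₂, x′−x″) ≤ ∫_{ℝ^{2d}} g_{λ₁}(ε₁, x′−z)·g_{λ₂}(ε₂, z−x″) dz ≤ C·g_{λ₁∨λ₂}(ε₁+ε₂, x′−x″). -/

import Mathlib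

open MeasureTheory Real

noncomputable section

/-- Points of `ℝ^{2d}`, split into the two `ℝ^d`-components. -/
abbrev Vec (d : ℕ) := EuclideanSpace ℝ (Fin d)

/-- `|𝕋_t⁻¹ x|²` for `x ∈ ℝ^{2d}`. -/
def TinvSq {d : ℕ} (t : ℝ) (x : Vec d × Vec d) : ℝ := ‖x.1‖ ^ 2 / t + ‖x.2‖ ^ 2 / t ^ 3

/-- The anisotropic Gaussian kernel `g_λ(t,x) := t^{-2d} exp(-|𝕋_t⁻¹x|²/(2λ))`. -/
def gker (d : ℕ) (l t : ℝ) (x : Vec d × Vec d) : ℝ :=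
  (t ^ (2 * d))⁻¹ * Real.exp (-(TinvSq t x) / (2 * l))

lemma quad_split' {d : ℕ} {a b : ℝ} (ha : 0 < a) (hb : 0 < b) (x y z : Vec d) :
    -‖x - z‖^2/(2*a) + -‖z - y‖^2/(2*b)
      = -‖x - y‖^2/(2*(a+b))
        + -((a+b)/(2*(a*b))) * ‖z - ((b/(a+b)) • x + (a/(a+b)) • y)‖^2 := by
  have hab : 0 < a + b := by linarith
  simp only [← real_inner_self_eq_norm_sq]
  simp only [inner_sub_left, inner_sub_right, inner_add_left, inner_add_right,
    real_inner_smul_left, real_inner_smul_right]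
  rw [real_inner_comm z x, real_inner_comm z y, real_inner_comm y x]
  field_simp
  ring

lemma conv_gauss {d : ℕ} {a b : ℝ} (ha : 0 < a) (hb : 0 < b) (x y : Vec d) :
    (∫ z : Vec d, rexp (-‖x - z‖^2/(2*a)) * rexp (-‖z - y‖^2/(2*b)))
      = (2*π*a*b/(a+b)) ^ ((d:ℝ)/2) * rexp (-‖x - y‖^2/(2*(a+b))) := by
  have hab : 0 < a + b := by linarith
  have key : ∀ z : Vec d, rexp (-‖x - z‖^2/(2*a)) * rexp (-‖z - y‖^2/(2*b))
      = rexp (-‖x - y‖^2/(2*(a+b)))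
        * rexp (-((a+b)/(2*(a*b))) * ‖z - ((b/(a+b)) • x + (a/(a+b)) • y)‖^2) := by
    intro z
    rw [← Real.exp_add, ← Real.exp_add, quad_split' ha hb x y z]
  simp_rw [key]
  rw [MeasureTheory.integral_const_mul,
    integral_sub_right_eq_self (fun w : Vec d =>
      rexp (-((a+b)/(2*(a*b))) * ‖w‖^2)) ((b/(a+b)) • x + (a/(a+b)) • y),
    GaussianFourier.integral_rexp_neg_mul_sq_norm (by positivity),
    finrank_euclideanSpace_fin]
  rw [show π / ((a+b)/(2*(a*b))) = 2*π*a*b/(a+b) by field_simp]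
  ring

lemma gker_eq (d : ℕ) {l t : ℝ} (hl : l ≠ 0) (ht : t ≠ 0) (x : Vec d × Vec d) :
    gker d l t x = (t^(2*d))⁻¹ *
      (rexp (-‖x.1‖^2 / (2*(l*t))) * rexp (-‖x.2‖^2 / (2*(l*t^3)))) := by
  rw [gker, TinvSq, ← Real.exp_add]
  congr 1
  field_simp
  ring

lemma inv_pow_eq {ε : ℝ} (hε : 0 < ε) (d : ℕ) :
    ((ε:ℝ)^(2*d))⁻¹ = (ε^(4:ℕ))^(-((d:ℝ)/2)) := by
  rw [← Real.rpow_natCast ε 4, ← Real.rpow_mul hε.le, ← Real.rpow_natCast ε (2*d),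
    ← Real.rpow_neg hε.le]
  congr 1
  push_cast
  ring

lemma rpow_combine {X Y : ℝ} (hX : 0 ≤ X) (hY : 0 < Y) (r : ℝ) :
    X^r * Y^(-r) = (X/Y)^r := by
  rw [Real.rpow_neg hY.le, Real.div_rpow hX hY.le, div_eq_mul_inv]

lemma prefactor_eq (d : ℕ) {c ε₁ ε₂ S T : ℝ} (hc : 0 < c) (h₁ : 0 < ε₁) (h₂ : 0 < ε₂)
    (hS : 0 < S) (hT : 0 < T) :
    (ε₁^(2*d))⁻¹ * (ε₂^(2*d))⁻¹ * ((c*ε₁*ε₂/S)^((d:ℝ)/2) * (c*ε₁^3*ε₂^3/T)^((d:ℝ)/2))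
      = (c^2/(S*T))^((d:ℝ)/2) := by
  rw [← Real.mul_rpow (by positivity) (by positivity),
    show (c*ε₁*ε₂/S)*(c*ε₁^3*ε₂^3/T) = (c^2/(S*T)) * ((ε₁*ε₂)^(4:ℕ)) by field_simp,
    Real.mul_rpow (by positivity) (by positivity),
    ← Real.rpow_natCast (ε₁*ε₂) 4, ← Real.rpow_mul (by positivity),
    show ((4:ℕ):ℝ)*((d:ℝ)/2) = ((2*d : ℕ):ℝ) by push_cast; ring,
    Real.rpow_natCast, mul_pow]
  have h1 : (ε₁:ℝ)^(2*d) ≠ 0 := by positivity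
  have h2 : (ε₂:ℝ)^(2*d) ≠ 0 := by positivity
  field_simp

set_option maxHeartbeats 1000000 in
/-- **Reproduction property of the anisotropic Gaussian kernels.**
For all `λ₁, λ₂ > 0` there are `c, C > 0`, depending only on `d, λ₁, λ₂`, such that for all
`ε₁, ε₂ > 0` and `x′, x″ ∈ ℝ^{2d}`:
`c·g_{(λ₁∧λ₂)/8}(ε₁+ε₂, x′-x″) ≤ ∫ g_{λ₁}(ε₁, x′-z) g_{λ₂}(ε₂, z-x″) dz
  ≤ C·g_{λ₁∨λ₂}(ε₁+ε₂, x′-x″)`. -/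
theorem gaussian_kernel_reproduction
    (d : ℕ) (l₁ l₂ : ℝ) (hl₁ : 0 < l₁) (hl₂ : 0 < l₂) :
    ∃ c C : ℝ, 0 < c ∧ 0 < C ∧
      ∀ (ε₁ ε₂ : ℝ) (x' x'' : Vec d × Vec d), 0 < ε₁ → 0 < ε₂ →
        c * gker d (min l₁ l₂ / 8) (ε₁ + ε₂) (x' - x'')
            ≤ ∫ z : Vec d × Vec d, gker d l₁ ε₁ (x' - z) * gker d l₂ ε₂ (z - x'') ∧
        (∫ z : Vec d × Vec d, gker d l₁ ε₁ (x' - z) * gker d l₂ ε₂ (z - x''))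
            ≤ C * gker d (max l₁ l₂) (ε₁ + ε₂) (x' - x'') := by
  have hπ := Real.pi_pos
  set lm := min l₁ l₂ with hlm_def
  set lM := max l₁ l₂ with hlM_def
  have hlm : 0 < lm := lt_min hl₁ hl₂
  have hlM : 0 < lM := lt_of_lt_of_le hl₁ (le_max_left _ _)
  have hlm₁ : lm ≤ l₁ := min_le_left _ _
  have hlm₂ : lm ≤ l₂ := min_le_right _ _
  have hlM₁ : l₁ ≤ lM := le_max_left _ _
  have hlM₂ : l₂ ≤ lM := le_max_right _ _
  refine ⟨((2*π*l₁*l₂/lM)^2)^((d:ℝ)/2), ((4*π*l₁*l₂/lm)^2)^((d:ℝ)/2),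
    by positivity, by positivity, ?_⟩
  intro ε₁ ε₂ x' x'' hε₁ hε₂
  have hε : 0 < ε₁ + ε₂ := by linarith
  set ε := ε₁ + ε₂ with hε_def
  set S := l₁*ε₁ + l₂*ε₂ with hS_def
  set T := l₁*ε₁^3 + l₂*ε₂^3 with hT_def
  have hSpos : 0 < S := by positivity
  have hTpos : 0 < T := by positivity
  set Δ := x' - x'' with hΔ_def
  -- bounds on S and T
  have hSge : lm * ε ≤ S := by
    rw [hS_def, hε_def]; nlinarith
  have hSle : S ≤ lM * ε := by
    rw [hS_def, hε_def]; nlinarith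
  have hcube : (ε₁+ε₂)^3 ≤ 4*(ε₁^3+ε₂^3) := by
    nlinarith [mul_nonneg (by positivity : (0:ℝ) ≤ ε₁+ε₂) (sq_nonneg (ε₁ - ε₂))]
  have hcube2 : ε₁^3+ε₂^3 ≤ (ε₁+ε₂)^3 := by nlinarith [mul_pos hε₁ hε₂]
  have hTge : lm * ε^3 / 4 ≤ T := by
    rw [hT_def, hε_def]
    have h1 : lm*ε₁^3 ≤ l₁*ε₁^3 := mul_le_mul_of_nonneg_right hlm₁ (by positivity)
    have h2 : lm*ε₂^3 ≤ l₂*ε₂^3 := mul_le_mul_of_nonneg_right hlm₂ (by positivity)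
    have h3 : lm*(ε₁+ε₂)^3 ≤ lm*(4*(ε₁^3+ε₂^3)) := mul_le_mul_of_nonneg_left hcube hlm.le
    linarith
  have hTle : T ≤ lM * ε^3 := by
    rw [hT_def, hε_def]
    have h1 : l₁*ε₁^3 ≤ lM*ε₁^3 := mul_le_mul_of_nonneg_right hlM₁ (by positivity)
    have h2 : l₂*ε₂^3 ≤ lM*ε₂^3 := mul_le_mul_of_nonneg_right hlM₂ (by positivity)
    have h3 : lM*(ε₁^3+ε₂^3) ≤ lM*(ε₁+ε₂)^3 := mul_le_mul_of_nonneg_left hcube2 hlM.le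
    linarith
  have hSTle : S*T ≤ lM^2 * ε^4 := by
    nlinarith [mul_le_mul hSle hTle hTpos.le (by positivity : (0:ℝ) ≤ lM*ε)]
  have hSTge : lm^2 * ε^4 / 4 ≤ S*T := by
    nlinarith [mul_le_mul hSge hTge (by positivity : (0:ℝ) ≤ lm*ε^3/4) hSpos.le]
  -- the exact value of the integral
  have hI : (∫ z : Vec d × Vec d, gker d l₁ ε₁ (x' - z) * gker d l₂ ε₂ (z - x''))
      = ((2*π*l₁*l₂)^2/(S*T))^((d:ℝ)/2)
        * (rexp (-‖Δ.1‖^2/(2*S)) * rexp (-‖Δ.2‖^2/(2*T))) := by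
    have step1 : ∀ z : Vec d × Vec d, gker d l₁ ε₁ (x' - z) * gker d l₂ ε₂ (z - x'') =
        ((ε₁^(2*d))⁻¹ * (ε₂^(2*d))⁻¹) *
         ((rexp (-‖x'.1 - z.1‖^2/(2*(l₁*ε₁))) * rexp (-‖z.1 - x''.1‖^2/(2*(l₂*ε₂)))) *
          (rexp (-‖x'.2 - z.2‖^2/(2*(l₁*ε₁^3))) * rexp (-‖z.2 - x''.2‖^2/(2*(l₂*ε₂^3))))) := by
      intro z
      rw [gker_eq d hl₁.ne' hε₁.ne' _, gker_eq d hl₂.ne' hε₂.ne' _]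
      simp only [Prod.fst_sub, Prod.snd_sub]
      ring
    simp_rw [step1]
    rw [MeasureTheory.integral_const_mul, MeasureTheory.Measure.volume_eq_prod,
      MeasureTheory.integral_prod_mul
        (f := fun w : Vec d => rexp (-‖x'.1 - w‖^2/(2*(l₁*ε₁))) * rexp (-‖w - x''.1‖^2/(2*(l₂*ε₂))))
        (g := fun w : Vec d => rexp (-‖x'.2 - w‖^2/(2*(l₁*ε₁^3))) * rexp (-‖w - x''.2‖^2/(2*(l₂*ε₂^3)))),
      conv_gauss (by positivity) (by positivity) x'.1 x''.1,
      conv_gauss (by positivity) (by positivity) x'.2 x''.2]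
    rw [show 2*π*(l₁*ε₁)*(l₂*ε₂)/(l₁*ε₁+l₂*ε₂) = (2*π*l₁*l₂)*ε₁*ε₂/S by rw [hS_def]; ring,
      show 2*π*(l₁*ε₁^3)*(l₂*ε₂^3)/(l₁*ε₁^3+l₂*ε₂^3) = (2*π*l₁*l₂)*ε₁^3*ε₂^3/T by rw [hT_def]; ring,
      show (2:ℝ)*(l₁*ε₁+l₂*ε₂) = 2*S by rw [hS_def],
      show (2:ℝ)*(l₁*ε₁^3+l₂*ε₂^3) = 2*T by rw [hT_def]]
    rw [← prefactor_eq d (by positivity : (0:ℝ) < 2*π*l₁*l₂) hε₁ hε₂ hSpos hTpos]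
    have : (x' - x'').1 = x'.1 - x''.1 := rfl
    have h2 : (x' - x'').2 = x'.2 - x''.2 := rfl
    rw [hΔ_def, this, h2]
    ring
  rw [hI]
  constructor
  · -- lower bound
    rw [gker_eq d (by positivity : lm/8 ≠ 0) hε.ne' Δ]
    have hpref : ((2*π*l₁*l₂/lM)^2)^((d:ℝ)/2) * (ε^(2*d))⁻¹
        ≤ ((2*π*l₁*l₂)^2/(S*T))^((d:ℝ)/2) := by
      rw [inv_pow_eq hε d, rpow_combine (by positivity) (by positivity)]
      apply Real.rpow_le_rpow (by positivity) _ (by positivity)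
      rw [show (2*π*l₁*l₂/lM)^2/ε^(4:ℕ) = (2*π*l₁*l₂)^2/(lM^2*ε^4) by
        field_simp]
      exact div_le_div_of_nonneg_left (by positivity) (by positivity) hSTle
    have he₁ : rexp (-‖Δ.1‖^2/(2*(lm/8*ε))) ≤ rexp (-‖Δ.1‖^2/(2*S)) := by
      apply Real.exp_le_exp.mpr
      rw [neg_div, neg_div, neg_le_neg_iff]
      apply div_le_div_of_nonneg_left (by positivity) (by positivity)
      nlinarith [mul_pos hlm hε]
    have he₂ : rexp (-‖Δ.2‖^2/(2*(lm/8*ε^3))) ≤ rexp (-‖Δ.2‖^2/(2*T)) := by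
      apply Real.exp_le_exp.mpr
      rw [neg_div, neg_div, neg_le_neg_iff]
      apply div_le_div_of_nonneg_left (by positivity) (by positivity)
      nlinarith [mul_pos hlm (pow_pos hε 3)]
    calc ((2*π*l₁*l₂/lM)^2)^((d:ℝ)/2) *
          ((ε^(2*d))⁻¹ * (rexp (-‖Δ.1‖^2/(2*(lm/8*ε))) * rexp (-‖Δ.2‖^2/(2*(lm/8*ε^3)))))
        = (((2*π*l₁*l₂/lM)^2)^((d:ℝ)/2) * (ε^(2*d))⁻¹) *
          (rexp (-‖Δ.1‖^2/(2*(lm/8*ε))) * rexp (-‖Δ.2‖^2/(2*(lm/8*ε^3)))) := by ring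
      _ ≤ ((2*π*l₁*l₂)^2/(S*T))^((d:ℝ)/2) *
          (rexp (-‖Δ.1‖^2/(2*S)) * rexp (-‖Δ.2‖^2/(2*T))) := by
          apply mul_le_mul hpref _ (by positivity) (by positivity)
          exact mul_le_mul he₁ he₂ (by positivity) (by positivity)
  · -- upper bound
    rw [gker_eq d hlM.ne' hε.ne' Δ]
    have hpref : ((2*π*l₁*l₂)^2/(S*T))^((d:ℝ)/2)
        ≤ ((4*π*l₁*l₂/lm)^2)^((d:ℝ)/2) * (ε^(2*d))⁻¹ := by
      rw [inv_pow_eq hε d, rpow_combine (by positivity) (by positivity)]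
      apply Real.rpow_le_rpow (by positivity) _ (by positivity)
      rw [show (4*π*l₁*l₂/lm)^2/ε^(4:ℕ) = (2*π*l₁*l₂)^2/(lm^2*ε^4/4) by
        field_simp; ring]
      exact div_le_div_of_nonneg_left (by positivity) (by positivity) hSTge
    have he₁ : rexp (-‖Δ.1‖^2/(2*S)) ≤ rexp (-‖Δ.1‖^2/(2*(lM*ε))) := by
      apply Real.exp_le_exp.mpr
      rw [neg_div, neg_div, neg_le_neg_iff]
      apply div_le_div_of_nonneg_left (by positivity) (by positivity)
      linarith
    have he₂ : rexp (-‖Δ.2‖^2/(2*T)) ≤ rexp (-‖Δ.2‖^2/(2*(lM*ε^3))) := by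
      apply Real.exp_le_exp.mpr
      rw [neg_div, neg_div, neg_le_neg_iff]
      apply div_le_div_of_nonneg_left (by positivity) (by positivity)
      linarith
    calc ((2*π*l₁*l₂)^2/(S*T))^((d:ℝ)/2) *
          (rexp (-‖Δ.1‖^2/(2*S)) * rexp (-‖Δ.2‖^2/(2*T)))
        ≤ (((4*π*l₁*l₂/lm)^2)^((d:ℝ)/2) * (ε^(2*d))⁻¹) *
          (rexp (-‖Δ.1‖^2/(2*(lM*ε))) * rexp (-‖Δ.2‖^2/(2*(lM*ε^3)))) := by
          apply mul_le_mul hpref _ (by positivity) (by positivity)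
          exact mul_le_mul he₁ he₂ (by positivity) (by positivity)
      _ = ((4*π*l₁*l₂/lm)^2)^((d:ℝ)/2) *
          ((ε^(2*d))⁻¹ * (rexp (-‖Δ.1‖^2/(2*(lM*ε))) * rexp (-‖Δ.2‖^2/(2*(lM*ε^3))))) := by
          ring

end
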